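/- arXiv:1708.09420 — 3 statements merged into one kernel-verified Lean document; each statement's English description precedes it below -/
import Mathlib

section
/- Let 0 < λ < Λ, let F and G be uniformly elliptic operators on symmetric n×n matrices with G(X) ≤ F(X) for every symmetric matrix X, let f, g ∈ L^∞(B₁), and let (u,v) solve the two membranes problem for (F, G, f, g, u₀, v₀) in the viscosity sense. Then |F(D²u)| ≤ max(‖f‖_{L^∞(B₁)}, ‖g‖_{L^∞(B₁)}) in B₁ in the viscosity sense; precisely: for every C² function φ and x₀ ∈ B₁ with φ ≤ u on B₁ and φ(x₀) = u(x₀), one has F(D²φ(x₀)) ≤ ‖f‖_{L^∞(B₁)}; and for every C² function φ and x₀ ∈ B₁ with φ ≥ u on B₁ and φ(x₀) = u(x₀), one has F(D²φ(x₀)) ≥ −max(‖f‖_{L^∞(B₁)}, ‖g‖_{L^∞(B₁)}). -/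
open Metric Set Matrix

noncomputable section

/-- Euclidean space `ℝⁿ`. -/
abbrev EucSp (n : ℕ) := EuclideanSpace ℝ (Fin n)

/-- The class `L_{λ,Λ}` of symmetric matrices whose eigenvalues lie between `lam` and `Lam`,
i.e. `lam • I ≤ A ≤ Lam • I`. -/
def PucciClass (n : ℕ) (lam Lam : ℝ) : Set (Matrix (Fin n) (Fin n) ℝ) :=
  {A | A.IsSymm ∧ (A - lam • (1 : Matrix (Fin n) (Fin n) ℝ)).PosSemidef ∧
    (Lam • (1 : Matrix (Fin n) (Fin n) ℝ) - A).PosSemidef}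

/-- The Pucci maximal operator `M⁺(X) = sup_{A ∈ L_{λ,Λ}} tr (A X)`. -/
def PucciSup (n : ℕ) (lam Lam : ℝ) (X : Matrix (Fin n) (Fin n) ℝ) : ℝ :=
  sSup ((fun A => (A * X).trace) '' PucciClass n lam Lam)

/-- The Pucci minimal operator `M⁻(X) = inf_{A ∈ L_{λ,Λ}} tr (A X)`. -/
def PucciInf (n : ℕ) (lam Lam : ℝ) (X : Matrix (Fin n) (Fin n) ℝ) : ℝ :=
  sInf ((fun A => (A * X).trace) '' PucciClass n lam Lam)

/-- The Hessian matrix `D²φ(x)` of `φ : ℝⁿ → ℝ`. -/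
def Hess (n : ℕ) (φ : EucSp n → ℝ) (x : EucSp n) : Matrix (Fin n) (Fin n) ℝ :=
  Matrix.of fun i j =>
    fderiv ℝ (fun y => fderiv ℝ φ y (EuclideanSpace.single j 1)) x (EuclideanSpace.single i 1)

/-- `F(D²u) ≤ f` in `U` in the viscosity sense: whenever a `C²` function `φ` touches `u` from
below at `x₀ ∈ U`, then `F(D²φ(x₀)) ≤ f(x₀)`. -/
def ViscLE (n : ℕ) (F : Matrix (Fin n) (Fin n) ℝ → ℝ) (u f : EucSp n → ℝ)
    (U : Set (EucSp n)) : Prop :=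
  ∀ φ : EucSp n → ℝ, ContDiff ℝ 2 φ → ∀ x₀ ∈ U, (∀ x ∈ U, φ x ≤ u x) → φ x₀ = u x₀ →
    F (Hess n φ x₀) ≤ f x₀

/-- `F(D²u) ≥ f` in `U` in the viscosity sense: whenever a `C²` function `φ` touches `u` from
above at `x₀ ∈ U`, then `F(D²φ(x₀)) ≥ f(x₀)`. -/
def ViscGE (n : ℕ) (F : Matrix (Fin n) (Fin n) ℝ → ℝ) (u f : EucSp n → ℝ)
    (U : Set (EucSp n)) : Prop :=
  ∀ φ : EucSp n → ℝ, ContDiff ℝ 2 φ → ∀ x₀ ∈ U, (∀ x ∈ U, u x ≤ φ x) → φ x₀ = u x₀ →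
    f x₀ ≤ F (Hess n φ x₀)

/-- `u` is a viscosity solution of `F(D²u) = f` in `U`. -/
def ViscEq (n : ℕ) (F : Matrix (Fin n) (Fin n) ℝ → ℝ) (u f : EucSp n → ℝ)
    (U : Set (EucSp n)) : Prop :=
  ViscLE n F u f U ∧ ViscGE n F u f U

/-- `F` is uniformly elliptic with respect to the class `L_{λ,Λ}`. -/
def UniformlyElliptic (n : ℕ) (lam Lam : ℝ) (F : Matrix (Fin n) (Fin n) ℝ → ℝ) : Prop :=
  ∀ X Y : Matrix (Fin n) (Fin n) ℝ, X.IsSymm → Y.IsSymm →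
    PucciInf n lam Lam (X - Y) ≤ F X - F Y ∧ F X - F Y ≤ PucciSup n lam Lam (X - Y)

/-- `‖w‖_{C^γ(S)} ≤ K`: `w` is bounded by `K` and `γ`-Hölder with constant `K` on `S`. -/
def HolderBnd (n : ℕ) (γ K : ℝ) (S : Set (EucSp n)) (w : EucSp n → ℝ) : Prop :=
  (∀ x ∈ S, |w x| ≤ K) ∧ ∀ x ∈ S, ∀ y ∈ S, |w x - w y| ≤ K * ‖x - y‖ ^ γ

/-- The pair `(u, v)` solves the two membranes problem for `(F, G, f, g, u₀, v₀)` in the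
viscosity sense. -/
def SolvesTwoMembranes (n : ℕ) (F G : Matrix (Fin n) (Fin n) ℝ → ℝ)
    (f g u₀ v₀ u v : EucSp n → ℝ) : Prop :=
  ContinuousOn u (closedBall 0 1) ∧ ContinuousOn v (closedBall 0 1) ∧
  (∀ x ∈ ball (0 : EucSp n) 1, v x ≤ u x) ∧
  ViscLE n F u f (ball 0 1) ∧
  ViscGE n G v g (ball 0 1) ∧
  ViscEq n F u f ({x | v x < u x} ∩ ball 0 1) ∧
  ViscEq n G v g ({x | v x < u x} ∩ ball 0 1) ∧
  (∀ x ∈ sphere (0 : EucSp n) 1, u x = u₀ x ∧ v x = v₀ x)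

/-- The `L^∞` norm of `f` on `S` (as a `sSup`). -/
def supAbs (n : ℕ) (S : Set (EucSp n)) (f : EucSp n → ℝ) : ℝ :=
  sSup ((fun x => |f x|) '' S)

end

/-! Touching `u` from below is handled by `F(D²u) ≤ f` in all of `B₁`. Touching from above at
`x₀`: where the membranes separate, `u` solves `F(D²u) = f`; where they meet, `φ ≥ u ≥ v` also
touches `v` from above, so `g ≤ G(D²φ) ≤ F(D²φ)`, the last step because Hessians are symmetric. -/

lemma hess_isSymm {n : ℕ} {φ : EucSp n → ℝ} (hφ : ContDiff ℝ 2 φ) (x : EucSp n) :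
    (Hess n φ x).IsSymm := by
  have hd : ∀ y, HasFDerivAt φ (fderiv ℝ φ y) y := fun y =>
    (hφ.differentiable two_ne_zero y).hasFDerivAt
  have hd2 : HasFDerivAt (fderiv ℝ φ) (fderiv ℝ (fderiv ℝ φ) x) x :=
    ((hφ.fderiv_right (m := 1) le_rfl).differentiable one_ne_zero x).hasFDerivAt
  have hpartial : ∀ w, fderiv ℝ (fun y => fderiv ℝ φ y w) x
      = (ContinuousLinearMap.apply ℝ ℝ w).comp (fderiv ℝ (fderiv ℝ φ) x) := fun w =>
    ((ContinuousLinearMap.apply ℝ ℝ w).hasFDerivAt.comp x hd2).fderiv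
  ext i j
  simp only [Hess, Matrix.transpose_apply, Matrix.of_apply, hpartial]
  exact second_derivative_symmetric hd hd2 _ _

lemma abs_le_supAbs {n : ℕ} {S : Set (EucSp n)} {f : EucSp n → ℝ}
    (hf : ∃ K, ∀ x ∈ S, |f x| ≤ K) {x₀ : EucSp n} (hx₀ : x₀ ∈ S) :
    |f x₀| ≤ supAbs n S f := by
  obtain ⟨K, hK⟩ := hf
  refine le_csSup ⟨K, ?_⟩ ⟨x₀, hx₀, rfl⟩
  rintro _ ⟨y, hy, rfl⟩
  exact hK y hy

lemma ViscGE.le_of_touch_above_of_contact {n : ℕ} {G : Matrix (Fin n) (Fin n) ℝ → ℝ}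
    {u v g φ : EucSp n → ℝ} {U : Set (EucSp n)} {x₀ : EucSp n}
    (hv : ViscGE n G v g U) (hvu : ∀ x ∈ U, v x ≤ u x) (hφ : ContDiff ℝ 2 φ) (hx₀ : x₀ ∈ U)
    (hφu : ∀ x ∈ U, u x ≤ φ x) (hφx₀ : φ x₀ = u x₀) (hcontact : u x₀ = v x₀) :
    g x₀ ≤ G (Hess n φ x₀) :=
  hv φ hφ x₀ hx₀ (fun x hx => (hvu x hx).trans (hφu x hx)) (hφx₀.trans hcontact)

theorem two_membranes_visc_hessian_bound_general
    (n : ℕ) (F G : Matrix (Fin n) (Fin n) ℝ → ℝ)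
    (f g u₀ v₀ u v : EucSp n → ℝ)
    (hGF : ∀ X : Matrix (Fin n) (Fin n) ℝ, X.IsSymm → G X ≤ F X)
    (hf : ∃ K, ∀ x ∈ ball (0 : EucSp n) 1, |f x| ≤ K)
    (hg : ∃ K, ∀ x ∈ ball (0 : EucSp n) 1, |g x| ≤ K)
    (hsol : SolvesTwoMembranes n F G f g u₀ v₀ u v) :
    (∀ φ : EucSp n → ℝ, ContDiff ℝ 2 φ → ∀ x₀ ∈ ball (0 : EucSp n) 1,
      (∀ x ∈ ball (0 : EucSp n) 1, φ x ≤ u x) → φ x₀ = u x₀ →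
        F (Hess n φ x₀) ≤ supAbs n (ball 0 1) f) ∧
    (∀ φ : EucSp n → ℝ, ContDiff ℝ 2 φ → ∀ x₀ ∈ ball (0 : EucSp n) 1,
      (∀ x ∈ ball (0 : EucSp n) 1, u x ≤ φ x) → φ x₀ = u x₀ →
        -(max (supAbs n (ball 0 1) f) (supAbs n (ball 0 1) g)) ≤ F (Hess n φ x₀)) := by
  obtain ⟨-, -, hvu, hsuper, hsub, hFeq, -, -⟩ := hsol
  refine ⟨fun φ hφ x₀ hx₀ hφu hφx₀ => ?_, fun φ hφ x₀ hx₀ hφu hφx₀ => ?_⟩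
  · have hFf := hsuper φ hφ x₀ hx₀ hφu hφx₀
    linarith [le_abs_self (f x₀), abs_le_supAbs hf hx₀]
  · rcases (hvu x₀ hx₀).lt_or_eq with hsep | hcontact
    · have hfF : f x₀ ≤ F (Hess n φ x₀) :=
        hFeq.2 φ hφ x₀ ⟨hsep, hx₀⟩ (fun x hx => hφu x hx.2) hφx₀
      linarith [neg_abs_le (f x₀), abs_le_supAbs hf hx₀,
        le_max_left (supAbs n (ball 0 1) f) (supAbs n (ball 0 1) g)]
    · have hgG := hsub.le_of_touch_above_of_contact hvu hφ hx₀ hφu hφx₀ hcontact.symm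
      have hGF' := hGF _ (hess_isSymm hφ x₀)
      linarith [neg_abs_le (g x₀), abs_le_supAbs hg hx₀,
        le_max_right (supAbs n (ball 0 1) f) (supAbs n (ball 0 1) g)]

/-- **Proposition 3.3 (Calderón–Zygmund type bound).** Let `F, G` be uniformly elliptic
operators with `G(X) ≤ F(X)` for all symmetric `X`, and let `(u, v)` solve the two membranes
problem for `(F, G, f, g, u₀, v₀)`. Then `|F(D²u)| ≤ max(‖f‖_∞, ‖g‖_∞)` in `B₁` in the
viscosity sense: any `C²` function `φ` touching `u` from below at `x₀ ∈ B₁` satisfies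
`F(D²φ(x₀)) ≤ ‖f‖_{L^∞(B₁)}`, and any `C²` function touching `u` from above at `x₀ ∈ B₁`
satisfies `F(D²φ(x₀)) ≥ −max(‖f‖_{L^∞(B₁)}, ‖g‖_{L^∞(B₁)})`. -/
theorem two_membranes_visc_hessian_bound
    (n : ℕ) (lam Lam : ℝ) (F G : Matrix (Fin n) (Fin n) ℝ → ℝ)
    (f g u₀ v₀ u v : EucSp n → ℝ)
    (hlam : 0 < lam) (hLam : lam < Lam)
    (hFell : UniformlyElliptic n lam Lam F) (hGell : UniformlyElliptic n lam Lam G)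
    (hGF : ∀ X : Matrix (Fin n) (Fin n) ℝ, X.IsSymm → G X ≤ F X)
    (hf : ∃ K, ∀ x ∈ ball (0 : EucSp n) 1, |f x| ≤ K)
    (hg : ∃ K, ∀ x ∈ ball (0 : EucSp n) 1, |g x| ≤ K)
    (hsol : SolvesTwoMembranes n F G f g u₀ v₀ u v) :
    (∀ φ : EucSp n → ℝ, ContDiff ℝ 2 φ → ∀ x₀ ∈ ball (0 : EucSp n) 1,
      (∀ x ∈ ball (0 : EucSp n) 1, φ x ≤ u x) → φ x₀ = u x₀ →
        F (Hess n φ x₀) ≤ supAbs n (ball 0 1) f) ∧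
    (∀ φ : EucSp n → ℝ, ContDiff ℝ 2 φ → ∀ x₀ ∈ ball (0 : EucSp n) 1,
      (∀ x ∈ ball (0 : EucSp n) 1, u x ≤ φ x) → φ x₀ = u x₀ →
        -(max (supAbs n (ball 0 1) f) (supAbs n (ball 0 1) g)) ≤ F (Hess n φ x₀)) :=
  two_membranes_visc_hessian_bound_general n F G f g u₀ v₀ u v hGF hf hg hsol
end

section
/- Let 0 < λ < Λ and C > 0, and define on the unit ball B₁ ⊂ ℝ² the functions u(x,y) = x² − y² + C·(max(x,0))³ and v(x,y) = x² − y². Then u and v are C² on B₁, u ≥ v on B₁, and for every (x,y) ∈ B₁ the Hessians satisfy M⁺(D²u(x,y)) = 2(Λ − λ) + 6CΛ·max(x,0) and M⁻(D²v(x,y)) = −2(Λ − λ). In particular (u,v) solves the two membranes problem in B₁ with F = M⁺, G = M⁻, f(x,y) = 2(Λ − λ) + 6CΛ·max(x,0) and g ≡ −2(Λ − λ). -/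
open Metric Set Matrix

noncomputable section

/-! `u` and `v` are sums of functions of a single coordinate, so their Hessians are diagonal:
`D²u = diag(2 + 6C x₊, -2)` and `D²v = diag(2, -2)`; here `x₊³` is `C²` because `x₊ᵏ` has
derivative `k x₊ᵏ⁻¹` for `k ≥ 2`. For `A ∈ L_{λ,Λ}` one has `tr (A · diag d) = ∑ Aᵢᵢ dᵢ` with
`λ ≤ Aᵢᵢ ≤ Λ`, and the diagonal matrix with entry `Λ` where `dᵢ ≥ 0` and `λ` where `dᵢ < 0`
attains the bound, so `M⁺(diag d) = ∑ (Λ dᵢ₊ - λ dᵢ₋)`; `M⁻(X) = -M⁺(-X)` gives the other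
operator. -/

theorem hasDerivAt_max_zero_pow {k : ℕ} (hk : 2 ≤ k) (t : ℝ) :
    HasDerivAt (fun s : ℝ => max s 0 ^ k) (k * max t 0 ^ (k - 1)) t := by
  have hk0 : (0 : ℝ) ^ k = 0 := zero_pow (by omega)
  have hk1 : (0 : ℝ) ^ (k - 1) = 0 := zero_pow (by omega)
  rcases lt_trichotomy t 0 with ht | rfl | ht
  · have hzero : (fun s : ℝ => max s 0 ^ k) =ᶠ[nhds t] fun _ => 0 := by
      filter_upwards [Iio_mem_nhds ht] with s hs
      rw [max_eq_right (le_of_lt hs), hk0]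
    rw [max_eq_right ht.le, hk1, mul_zero]
    exact (hasDerivAt_const t (0 : ℝ)).congr_of_eventuallyEq hzero
  · rw [hasDerivAt_iff_isLittleO_nhds_zero]
    have hbound : (fun s : ℝ => max s 0 ^ k) =O[nhds 0] fun s => s ^ k :=
      Asymptotics.IsBigO.of_bound 1 (Filter.Eventually.of_forall fun s => by
        rw [one_mul, norm_pow, norm_pow]
        gcongr
        rcases le_total s 0 with hs | hs <;> simp [hs])
    simpa [hk0, hk1] using hbound.trans_isLittleO (Asymptotics.isLittleO_pow_id (by omega))
  · have hpow : (fun s : ℝ => max s 0 ^ k) =ᶠ[nhds t] fun s => s ^ k := by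
      filter_upwards [Ioi_mem_nhds ht] with s hs
      rw [max_eq_left (le_of_lt hs)]
    rw [max_eq_left ht.le]
    exact (hasDerivAt_pow k t).congr_of_eventuallyEq hpow

theorem contDiff_max_zero_pow (k : ℕ) : ContDiff ℝ k (fun s : ℝ => max s 0 ^ (k + 1)) := by
  induction k with
  | zero => simpa using continuous_id.max continuous_const
  | succ k ih =>
    have hderiv (t : ℝ) := hasDerivAt_max_zero_pow (k := k + 2) (by omega) t
    rw [Nat.cast_succ, contDiff_succ_iff_deriv]
    refine ⟨fun t => (hderiv t).differentiableAt, by simp, ?_⟩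
    rw [funext fun t => (hderiv t).deriv]
    exact contDiff_const.mul ih

theorem hess_sum_coord_eq_diagonal {n : ℕ} {h h' : Fin n → ℝ → ℝ} {h'' : Fin n → ℝ}
    {x : EucSp n} (hh : ∀ i t, HasDerivAt (h i) (h' i t) t)
    (hh' : ∀ i, HasDerivAt (h' i) (h'' i) (x i)) :
    Hess n (fun p => ∑ i, h i (p i)) x = diagonal h'' := by
  have hgrad (y : EucSp n) : HasFDerivAt (fun p : EucSp n => ∑ i, h i (p i))
      (∑ i, h' i (y i) • (EuclideanSpace.proj i : EucSp n →L[ℝ] ℝ)) y :=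
    HasFDerivAt.fun_sum fun i _ =>
      (hh i (y i)).comp_hasFDerivAt y (EuclideanSpace.proj i : EucSp n →L[ℝ] ℝ).hasFDerivAt
  have hpartial (j : Fin n) : (fun y : EucSp n => fderiv ℝ (fun p : EucSp n => ∑ i, h i (p i)) y
      (EuclideanSpace.single j 1)) = fun y => h' j (y j) := by
    funext y
    simp [(hgrad y).fderiv]
  ext i j
  have hsecond : HasFDerivAt (fun y : EucSp n => h' j (y j))
      (h'' j • (EuclideanSpace.proj j : EucSp n →L[ℝ] ℝ)) x :=
    (hh' j).comp_hasFDerivAt x (EuclideanSpace.proj j : EucSp n →L[ℝ] ℝ).hasFDerivAt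
  simp only [Hess, of_apply, hpartial j, hsecond.fderiv]
  by_cases hij : i = j
  · simp [hij]
  · simp [hij, Ne.symm hij]

theorem diag_mem_Icc_of_mem_pucciClass {n : ℕ} {lam Lam : ℝ} {A : Matrix (Fin n) (Fin n) ℝ}
    (hA : A ∈ PucciClass n lam Lam) (i : Fin n) : A i i ∈ Icc lam Lam := by
  obtain ⟨-, hlower, hupper⟩ := hA
  have h1 := hlower.diag_nonneg (i := i)
  have h2 := hupper.diag_nonneg (i := i)
  simp only [Matrix.sub_apply, Matrix.smul_apply, one_apply_eq, smul_eq_mul, mul_one,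
    sub_nonneg] at h1 h2
  exact ⟨h1, h2⟩

theorem diagonal_mem_pucciClass {n : ℕ} {lam Lam : ℝ} {c : Fin n → ℝ}
    (hc : ∀ i, c i ∈ Icc lam Lam) : diagonal c ∈ PucciClass n lam Lam := by
  refine ⟨isSymm_diagonal c, ?_, ?_⟩ <;>
    rw [smul_one_eq_diagonal, diagonal_sub, posSemidef_diagonal_iff] <;>
    intro i <;> simp [(hc i).1, (hc i).2]

theorem mul_le_mul_max_add_mul_min {lam Lam a : ℝ} (ha : a ∈ Icc lam Lam) (t : ℝ) :
    a * t ≤ Lam * max t 0 + lam * min t 0 := by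
  rcases le_total t 0 with ht | ht
  · simp only [max_eq_right ht, min_eq_left ht]
    nlinarith [ha.1]
  · simp only [max_eq_left ht, min_eq_right ht]
    nlinarith [ha.2]

theorem pucciSup_diagonal {n : ℕ} {lam Lam : ℝ} (hLam : lam ≤ Lam) (d : Fin n → ℝ) :
    PucciSup n lam Lam (diagonal d) = ∑ i, (Lam * max (d i) 0 + lam * min (d i) 0) := by
  refine IsGreatest.csSup_eq ⟨⟨diagonal fun i => if 0 ≤ d i then Lam else lam, ?_, ?_⟩, ?_⟩
  · refine diagonal_mem_pucciClass fun i => ?_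
    split_ifs <;> simp [hLam]
  · simp only [diagonal_mul_diagonal, trace_diagonal]
    refine Finset.sum_congr rfl fun i _ => ?_
    split_ifs with hd
    · simp [hd]
    · simp [(not_le.mp hd).le]
  · rintro _ ⟨A, hA, rfl⟩
    simp only [trace, diag, mul_diagonal]
    exact Finset.sum_le_sum fun i _ =>
      mul_le_mul_max_add_mul_min (diag_mem_Icc_of_mem_pucciClass hA i) (d i)

theorem pucciInf_eq_neg_pucciSup_neg (n : ℕ) (lam Lam : ℝ) (X : Matrix (Fin n) (Fin n) ℝ) :
    PucciInf n lam Lam X = -PucciSup n lam Lam (-X) := by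
  simp only [PucciInf, PucciSup, Real.sInf_def, mul_neg, trace_neg, ← Set.image_neg_eq_neg,
    Set.image_image]

theorem pucciInf_diagonal {n : ℕ} {lam Lam : ℝ} (hLam : lam ≤ Lam) (d : Fin n → ℝ) :
    PucciInf n lam Lam (diagonal d) = ∑ i, (lam * max (d i) 0 + Lam * min (d i) 0) := by
  rw [pucciInf_eq_neg_pucciSup_neg, diagonal_neg, pucciSup_diagonal hLam,
    ← Finset.sum_neg_distrib]
  refine Finset.sum_congr rfl fun i _ => ?_
  rw [← neg_zero, max_neg_neg, min_neg_neg, neg_zero]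
  ring

theorem pucciSup_diagonal_fin_two {lam Lam a b : ℝ} (hLam : lam ≤ Lam) (ha : 0 ≤ a)
    (hb : 0 ≤ b) : PucciSup 2 lam Lam (diagonal ![a, -b]) = Lam * a - lam * b := by
  rw [pucciSup_diagonal hLam, Fin.sum_univ_two]
  simp [ha, hb, sub_eq_add_neg]

theorem pucciInf_diagonal_fin_two {lam Lam a b : ℝ} (hLam : lam ≤ Lam) (ha : 0 ≤ a)
    (hb : 0 ≤ b) : PucciInf 2 lam Lam (diagonal ![a, -b]) = lam * a - Lam * b := by
  rw [pucciInf_diagonal hLam, Fin.sum_univ_two]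
  simp [ha, hb, sub_eq_add_neg]

theorem hess_sq_sub_sq_add_mul_max_zero_pow (C : ℝ) (x : EucSp 2) :
    Hess 2 (fun p => p 0 ^ 2 - p 1 ^ 2 + C * max (p 0) 0 ^ 3) x
      = diagonal ![2 + 6 * C * max (x 0) 0, -2] := by
  have hsum : (fun p : EucSp 2 => p 0 ^ 2 - p 1 ^ 2 + C * max (p 0) 0 ^ 3)
      = fun p => ∑ i, ![fun t => t ^ 2 + C * max t 0 ^ 3, fun t => -t ^ 2] i (p i) := by
    funext p
    simp only [Fin.sum_univ_two, Matrix.cons_val_zero, Matrix.cons_val_one]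
    ring
  rw [hsum]
  refine hess_sum_coord_eq_diagonal
    (h' := ![fun t => 2 * t + C * (3 * max t 0 ^ 2), fun t => -(2 * t)]) ?_ ?_
  · refine Fin.forall_fin_two.mpr ⟨fun t => ?_, fun t => ?_⟩
    · exact ((hasDerivAt_pow 2 t).add
        ((hasDerivAt_max_zero_pow (k := 3) (by norm_num) t).const_mul C)).congr_deriv
        (by norm_num)
    · exact (hasDerivAt_pow 2 t).neg.congr_deriv (by norm_num)
  · refine Fin.forall_fin_two.mpr ⟨?_, ?_⟩
    · exact (((hasDerivAt_id _).const_mul 2).add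
        (((hasDerivAt_max_zero_pow (k := 2) le_rfl _).const_mul 3).const_mul C)).congr_deriv
        (by norm_num; ring)
    · exact ((hasDerivAt_id _).const_mul 2).neg.congr_deriv (by norm_num)

theorem contDiff_sq_sub_sq_add_mul_max_zero_pow (C : ℝ) :
    ContDiff ℝ 2 (fun p : EucSp 2 => p 0 ^ 2 - p 1 ^ 2 + C * max (p 0) 0 ^ 3) := by
  have hcoord (i : Fin 2) : ContDiff ℝ 2 (fun p : EucSp 2 => p i) :=
    (EuclideanSpace.proj i : EucSp 2 →L[ℝ] ℝ).contDiff
  exact ((hcoord 0).pow 2).sub ((hcoord 1).pow 2) |>.add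
    (contDiff_const.mul ((contDiff_max_zero_pow 2).comp (hcoord 0)))

theorem two_membranes_example_2d_general
    (lam Lam C : ℝ) (hLam : lam < Lam) (hC : 0 < C) :
    let u : EucSp 2 → ℝ := fun p => (p 0) ^ 2 - (p 1) ^ 2 + C * (max (p 0) 0) ^ 3
    let v : EucSp 2 → ℝ := fun p => (p 0) ^ 2 - (p 1) ^ 2
    let f : EucSp 2 → ℝ := fun p => 2 * (Lam - lam) + 6 * C * Lam * max (p 0) 0
    let g : EucSp 2 → ℝ := fun _ => -(2 * (Lam - lam))
    ContDiffOn ℝ 2 u (ball 0 1) ∧ ContDiffOn ℝ 2 v (ball 0 1) ∧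
    (∀ p ∈ ball (0 : EucSp 2) 1, v p ≤ u p) ∧
    (∀ p ∈ ball (0 : EucSp 2) 1, PucciSup 2 lam Lam (Hess 2 u p) = f p) ∧
    (∀ p ∈ ball (0 : EucSp 2) 1, PucciInf 2 lam Lam (Hess 2 v p) = g p) ∧
    (∀ p ∈ ball (0 : EucSp 2) 1, PucciSup 2 lam Lam (Hess 2 u p) ≤ f p) ∧
    (∀ p ∈ ball (0 : EucSp 2) 1, g p ≤ PucciInf 2 lam Lam (Hess 2 v p)) ∧
    (∀ p ∈ {q : EucSp 2 | v q < u q} ∩ ball 0 1,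
      PucciSup 2 lam Lam (Hess 2 u p) = f p ∧ PucciInf 2 lam Lam (Hess 2 v p) = g p) := by
  intro u v f g
  have hv : v = fun p => p 0 ^ 2 - p 1 ^ 2 + 0 * max (p 0) 0 ^ 3 := by
    simp only [v, zero_mul, add_zero]
  have hsup (p : EucSp 2) : PucciSup 2 lam Lam (Hess 2 u p) = f p := by
    rw [hess_sq_sub_sq_add_mul_max_zero_pow,
      pucciSup_diagonal_fin_two hLam.le (by positivity) zero_le_two]
    ring
  have hinf (p : EucSp 2) : PucciInf 2 lam Lam (Hess 2 v p) = g p := by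
    rw [hv, hess_sq_sub_sq_add_mul_max_zero_pow, pucciInf_diagonal_fin_two hLam.le
      (by norm_num) zero_le_two]
    ring
  have hvu (p : EucSp 2) : v p ≤ u p := le_add_of_nonneg_right (by positivity)
  exact ⟨(contDiff_sq_sub_sq_add_mul_max_zero_pow C).contDiffOn,
    hv ▸ (contDiff_sq_sub_sq_add_mul_max_zero_pow 0).contDiffOn, fun p _ => hvu p,
    fun p _ => hsup p, fun p _ => hinf p, fun p _ => (hsup p).le, fun p _ => (hinf p).ge,
    fun p _ => ⟨hsup p, hinf p⟩⟩

/-- **Failure of non-degeneracy: the explicit example.** On `B₁ ⊂ ℝ²`, the functions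
`u(x,y) = x² − y² + C (x₊)³` and `v(x,y) = x² − y²` are `C²`, satisfy `u ≥ v`, their Hessians
satisfy `M⁺(D²u) = 2(Λ − λ) + 6CΛ x₊` and `M⁻(D²v) = −2(Λ − λ)` at every point of `B₁`, and in
particular `(u, v)` solves the two membranes problem in `B₁` with `F = M⁺`, `G = M⁻`,
`f(x,y) = 2(Λ − λ) + 6CΛ x₊` and `g ≡ −2(Λ − λ)` (in the classical pointwise sense). -/
theorem two_membranes_example_2d
    (lam Lam C : ℝ) (hlam : 0 < lam) (hLam : lam < Lam) (hC : 0 < C) :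
    let u : EucSp 2 → ℝ := fun p => (p 0) ^ 2 - (p 1) ^ 2 + C * (max (p 0) 0) ^ 3
    let v : EucSp 2 → ℝ := fun p => (p 0) ^ 2 - (p 1) ^ 2
    let f : EucSp 2 → ℝ := fun p => 2 * (Lam - lam) + 6 * C * Lam * max (p 0) 0
    let g : EucSp 2 → ℝ := fun _ => -(2 * (Lam - lam))
    ContDiffOn ℝ 2 u (ball 0 1) ∧ ContDiffOn ℝ 2 v (ball 0 1) ∧
    (∀ p ∈ ball (0 : EucSp 2) 1, v p ≤ u p) ∧
    (∀ p ∈ ball (0 : EucSp 2) 1, PucciSup 2 lam Lam (Hess 2 u p) = f p) ∧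
    (∀ p ∈ ball (0 : EucSp 2) 1, PucciInf 2 lam Lam (Hess 2 v p) = g p) ∧
    (∀ p ∈ ball (0 : EucSp 2) 1, PucciSup 2 lam Lam (Hess 2 u p) ≤ f p) ∧
    (∀ p ∈ ball (0 : EucSp 2) 1, g p ≤ PucciInf 2 lam Lam (Hess 2 v p)) ∧
    (∀ p ∈ {q : EucSp 2 | v q < u q} ∩ ball 0 1,
      PucciSup 2 lam Lam (Hess 2 u p) = f p ∧ PucciInf 2 lam Lam (Hess 2 v p) = g p) :=
  two_membranes_example_2d_general lam Lam C hLam hC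
end
end

section
/- Let C > 0 and define w(x,y) = C·(max(x,0))³ on ℝ². Then the origin 0 lies on the boundary of the set {w > 0}, and for every r with 0 < r < 1: sup over the circle {(x,y) : x² + y² = r²} of w equals C·r³, which is strictly less than C·r². Consequently, the quadratic non-degeneracy property 'sup_{∂B_r(x₀)} w ≥ c·r² for all small r > 0 at every free boundary point x₀ ∈ ∂{w > 0}' fails for w (= u − v for the solution pair u(x,y) = x² − y² + C·(max(x,0))³, v(x,y) = x² − y² of the two membranes problem). -/
open Metric Set

noncomputable section

lemma coord_le_norm (p : EuclideanSpace ℝ (Fin 2)) : |p 0| ≤ ‖p‖ := by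
  rw [EuclideanSpace.norm_eq]
  have h : |p 0| = Real.sqrt (‖p 0‖ ^ 2) := by
    rw [Real.sqrt_sq_eq_abs]; simp
  rw [h]
  apply Real.sqrt_le_sqrt
  exact Finset.single_le_sum (f := fun i => ‖p i‖ ^ 2) (fun i _ => by positivity) (by simp)

lemma sup_eq (C : ℝ) (hC : 0 < C) (r : ℝ) (hr : 0 < r) :
    sSup ((fun p : EuclideanSpace ℝ (Fin 2) => C * (max (p 0) 0) ^ 3) ''
      sphere (0 : EuclideanSpace ℝ (Fin 2)) r) = C * r ^ 3 := by
  apply IsGreatest.csSup_eq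
  constructor
  · refine ⟨EuclideanSpace.single 0 r, ?_, ?_⟩
    · simp [mem_sphere_iff_norm, EuclideanSpace.norm_single, abs_of_pos hr]
    · simp [max_eq_left hr.le]
  · rintro y ⟨p, hp, rfl⟩
    have hn : ‖p‖ = r := by simpa [mem_sphere_iff_norm] using hp
    have h0 : max (p 0) 0 ≤ r := by
      apply max_le _ hr.le
      calc p 0 ≤ |p 0| := le_abs_self _
        _ ≤ ‖p‖ := coord_le_norm p
        _ = r := hn
    have h3 : (max (p 0) 0) ^ 3 ≤ r ^ 3 :=
      pow_le_pow_left₀ (le_max_right _ _) h0 3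
    simpa using mul_le_mul_of_nonneg_left h3 hC.le

/-- **Failure of quadratic non-degeneracy.** For `w(x,y) = C (x₊)³` on `ℝ²`: the origin is a
free boundary point (it lies on `∂{w > 0}`); for every `0 < r < 1` the supremum of `w` over
the circle of radius `r` centered at the origin equals `C r³`, which is strictly smaller than
`C r²`; consequently there is no constant `c > 0` with `sup_{∂B_r(0)} w ≥ c r²` for all small
`r > 0`. -/
theorem nondegeneracy_fails
    (C : ℝ) (hC : 0 < C) :
    let w : EuclideanSpace ℝ (Fin 2) → ℝ := fun p => C * (max (p 0) 0) ^ 3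
    (0 : EuclideanSpace ℝ (Fin 2)) ∈ frontier {p | 0 < w p} ∧
    (∀ r : ℝ, 0 < r → r < 1 →
      sSup (w '' sphere (0 : EuclideanSpace ℝ (Fin 2)) r) = C * r ^ 3 ∧
      C * r ^ 3 < C * r ^ 2) ∧
    ¬ ∃ c : ℝ, 0 < c ∧ ∃ r₀ : ℝ, 0 < r₀ ∧ ∀ r : ℝ, 0 < r → r < r₀ →
        c * r ^ 2 ≤ sSup (w '' sphere (0 : EuclideanSpace ℝ (Fin 2)) r) := by
  intro w
  refine ⟨?_, ?_, ?_⟩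
  · rw [frontier, mem_diff]
    constructor
    · rw [_root_.mem_closure_iff]
      intro U hU h0U
      obtain ⟨ε, hε, hball⟩ := Metric.isOpen_iff.mp hU _ h0U
      refine ⟨EuclideanSpace.single 0 (ε/2), hball ?_, ?_⟩
      · simp [mem_ball_iff_norm, EuclideanSpace.norm_single, abs_of_pos (half_pos hε)]
        rw [abs_of_pos hε]; linarith
      · show 0 < C * (max (EuclideanSpace.single 0 (ε/2) 0) 0) ^ 3
        simp [max_eq_left (half_pos hε).le]
        positivity
    · intro hmem
      have := interior_subset hmem
      simp [w] at this
  · intro r hr hr1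
    refine ⟨sup_eq C hC r hr, ?_⟩
    have h3 : r ^ 2 * r < r ^ 2 * 1 := mul_lt_mul_of_pos_left hr1 (pow_pos hr 2)
    nlinarith
  · rintro ⟨c, hc, r₀, hr₀, hle⟩
    set r := min (min r₀ 1) (c / C) / 2 with hrdef
    have h1 : 0 < c / C := div_pos hc hC
    have hr : 0 < r := by positivity
    have hm1 : min (min r₀ 1) (c / C) ≤ r₀ := le_trans (min_le_left _ _) (min_le_left _ _)
    have hm2 : min (min r₀ 1) (c / C) ≤ c / C := min_le_right _ _
    have hrr₀ : r < r₀ := by rw [hrdef]; linarith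
    have hrC : r < c / C := by rw [hrdef]; linarith
    have := hle r hr hrr₀
    rw [sup_eq C hC r hr] at this
    have hCr : C * r < c := by
      rw [lt_div_iff₀ hC] at hrC; linarith
    nlinarith [mul_lt_mul_of_pos_right hCr (mul_pos hr hr)]
end
end
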